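/- arXiv:2003.09367 — 2 statements merged into one kernel-verified Lean document; each statement's English description precedes it below -/
import Mathlib

section
/- Let additionally w : Ω → ℝ^d be ℋ-strongly measurable (w represents the exogenous shift ℓ(x_t) − x_t of the regressors). If the real random variables w ⬝ᵥ μvec, w ⬝ᵥ (Q ·ᵥ u̇), w ⬝ᵥ (Q ·ᵥ g), and w ⬝ᵥ (Q ·ᵥ ẏ) are integrable, then ∫ (w ⬝ᵥ μvec) dμ = ∫ w ⬝ᵥ (Q ·ᵥ ẏ − Q ·ᵥ g) dμ. (Identification of the average outcome change under an exogenous policy intervention.) -/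
open MeasureTheory Matrix

/-! Where `Ẋ` has full column rank, `Q Ẋ = 1`, so `Q ẏ - Q g = μvec + Q u̇` and the claim reduces
to `∫ w ⬝ᵥ Q u̇ = 0`. Since `w ⬝ᵥ Q u̇ = (w ᵥ* Q) ⬝ᵥ u̇` with `w ᵥ* Q` an `ℋ`-measurable vector, the
pull-out property of conditional expectation gives `μ[(w ᵥ* Q) ⬝ᵥ u̇ | ℋ] = (w ᵥ* Q) ⬝ᵥ μ[u̇ | ℋ] = 0`,
and integrating the conditional expectation yields the claim. -/

namespace Matrix

variable {K m n : Type*} [Field K] [Fintype m] [Fintype n] [DecidableEq n]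

theorem isUnit_of_rank_eq_card {B : Matrix n n K} (h : B.rank = Fintype.card n) : IsUnit B := by
  rw [← mulVec_surjective_iff_isUnit]
  refine LinearMap.range_eq_top.mp
    (Submodule.eq_top_of_finrank_eq (S := LinearMap.range B.mulVecLin) ?_)
  rw [← rank, h, Module.finrank_fintype_fun_eq_card]

theorem inv_transpose_mul_self_mul_transpose_mul_self [LinearOrder K] [IsStrictOrderedRing K]
    {A : Matrix m n K} (h : A.rank = Fintype.card n) : (Aᵀ * A)⁻¹ * Aᵀ * A = 1 := by
  rw [Matrix.mul_assoc, nonsing_inv_mul _ ((isUnit_iff_isUnit_det _).mp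
    (isUnit_of_rank_eq_card (by rw [rank_transpose_mul_self, h])))]

end Matrix

section Measurability

variable {α m n : Type*} [MeasurableSpace α]

/- Mathlib puts no σ-algebra on `Matrix`, so measurability is stated entrywise and continuity is
transported through the product σ-algebra of `m → n → ℝ`. -/
theorem Continuous.measurable_comp_matrix [Countable m] [Countable n] {β : Type*}
    [TopologicalSpace β] [MeasurableSpace β] [BorelSpace β] {F : Matrix m n ℝ → β}
    (hF : Continuous F) {M : α → Matrix m n ℝ} (hM : ∀ i j, Measurable fun a => M a i j) :
    Measurable fun a => F (M a) := by
  have hF' : Continuous fun A : m → n → ℝ => F (of A) := hF.comp continuous_id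
  exact hF'.measurable.comp (measurable_pi_lambda _ fun i => measurable_pi_lambda _ (hM i))

theorem measurable_inv_transpose_mul_self_mul_transpose_apply [Fintype m] [Fintype n]
    [DecidableEq n] {X : α → Matrix m n ℝ} (hX : ∀ i j, Measurable fun a => X a i j)
    (i : n) (j : m) : Measurable fun a => (((X a)ᵀ * X a)⁻¹ * (X a)ᵀ) i j := by
  simp only [inv_def, Ring.inverse_eq_inv', smul_mul, Matrix.smul_apply, smul_eq_mul]
  have hgram : Continuous fun A : Matrix m n ℝ => Aᵀ * A :=
    continuous_id.matrix_transpose.matrix_mul continuous_id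
  refine (measurable_inv.comp ?_).mul ?_
  · exact hgram.matrix_det.measurable_comp_matrix hX
  · exact ((hgram.matrix_adjugate.matrix_mul continuous_id.matrix_transpose).matrix_elem i j
      ).measurable_comp_matrix hX

end Measurability

section Orthogonality

variable {Ω ι : Type*} {m mΩ : MeasurableSpace Ω} {μ : Measure Ω} [Fintype ι]

theorem integral_dotProduct_eq_zero_of_condExp_eq_zero (hm : m ≤ mΩ) [SigmaFinite (μ.trim hm)]
    {h u : Ω → ι → ℝ} (hh : StronglyMeasurable[m] h) (hu : Integrable u μ)
    (hce : ∀ i, μ[fun ω => u ω i | m] =ᵐ[μ] 0) (hhu : Integrable (fun ω => h ω ⬝ᵥ u ω) μ) :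
    ∫ ω, h ω ⬝ᵥ u ω ∂μ = 0 := by
  have hu_ce : μ[u | m] =ᵐ[μ] 0 := by
    have := fun i => ((ContinuousLinearMap.proj i).comp_condExp_comm hu (m := m)).trans (hce i)
    filter_upwards [ae_all_iff.2 this] with ω hω using funext hω
  -- the bilinear pull-out needs `h ⬝ᵥ u` integrable, not each `h i * u i`
  have hpull := condExp_bilin_of_stronglyMeasurable_left
    (dotProductBilin ℝ ℝ : (ι → ℝ) →ₗ[ℝ] (ι → ℝ) →ₗ[ℝ] ℝ).toContinuousBilinearMap hh hhu hu
  calc ∫ ω, h ω ⬝ᵥ u ω ∂μ = ∫ ω, (μ[fun ω => h ω ⬝ᵥ u ω | m]) ω ∂μ := (integral_condExp hm).symm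
    _ = ∫ ω, h ω ⬝ᵥ (μ[u | m]) ω ∂μ := integral_congr_ae hpull
    _ = 0 := by
      rw [integral_congr_ae (hu_ce.mono fun ω hω => by rw [hω])]
      simp

end Orthogonality

theorem average_policy_effect_identification_general
    {Ω : Type*} {mΩ : MeasurableSpace Ω} (μ : Measure Ω) [IsProbabilityMeasure μ]
    (ℋ : MeasurableSpace Ω) (hℋ : ℋ ≤ mΩ)
    (m d : ℕ)
    (Xdot : Ω → Matrix (Fin m) (Fin d) ℝ)
    (hXmeas : ∀ i j, StronglyMeasurable[ℋ] fun ω => Xdot ω i j)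
    (hXrank : ∀ᵐ ω ∂μ, (Xdot ω).rank = d)
    (Q : Ω → Matrix (Fin d) (Fin m) ℝ)
    (hQ : ∀ ω, Q ω = ((Xdot ω)ᵀ * Xdot ω)⁻¹ * (Xdot ω)ᵀ)
    (μvec : Ω → Fin d → ℝ)
    (g : Ω → Fin m → ℝ)
    (udot : Ω → Fin m → ℝ) (hu_int : Integrable udot μ)
    (hu_ce : ∀ i, μ[(fun ω => udot ω i) | ℋ] =ᵐ[μ] 0)
    (ydot : Ω → Fin m → ℝ)
    (hy : ∀ ω, ydot ω = Xdot ω *ᵥ μvec ω + g ω + udot ω)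
    (w : Ω → Fin d → ℝ)
    (hwmeas : ∀ i, StronglyMeasurable[ℋ] fun ω => w ω i)
    (hwμ : Integrable (fun ω => w ω ⬝ᵥ μvec ω) μ)
    (hwQu : Integrable (fun ω => w ω ⬝ᵥ (Q ω *ᵥ udot ω)) μ) :
    ∫ ω, (w ω ⬝ᵥ μvec ω) ∂μ
      = ∫ ω, w ω ⬝ᵥ (Q ω *ᵥ ydot ω - Q ω *ᵥ g ω) ∂μ := by
  have hwQ : StronglyMeasurable[ℋ] fun ω => w ω ᵥ* Q ω := by
    refine (measurable_pi_lambda _ fun j => ?_).stronglyMeasurable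
    simp only [hQ, vecMul, dotProduct]
    exact Finset.measurable_sum _ fun i _ => (hwmeas i).measurable.mul
      (measurable_inv_transpose_mul_self_mul_transpose_apply (hXmeas · · |>.measurable) i j)
  have horth : ∫ ω, w ω ⬝ᵥ (Q ω *ᵥ udot ω) ∂μ = 0 := by
    simp only [dotProduct_mulVec] at hwQu ⊢
    exact integral_dotProduct_eq_zero_of_condExp_eq_zero hℋ hwQ hu_int hu_ce hwQu
  have hdecomp : ∀ᵐ ω ∂μ, w ω ⬝ᵥ (Q ω *ᵥ ydot ω - Q ω *ᵥ g ω)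
      = w ω ⬝ᵥ μvec ω + w ω ⬝ᵥ (Q ω *ᵥ udot ω) := by
    filter_upwards [hXrank] with ω hrank
    have hQX : Q ω * Xdot ω = 1 := by
      rw [hQ ω]
      exact inv_transpose_mul_self_mul_transpose_mul_self (by rw [hrank, Fintype.card_fin])
    rw [hy ω, mulVec_add, mulVec_add, mulVec_mulVec, hQX, one_mulVec, add_sub_right_comm,
      add_sub_cancel_right, dotProduct_add]
  rw [integral_congr_ae hdecomp, integral_add hwμ hwQu, horth, add_zero]

/-- Identification of the average outcome change under an exogenous policy intervention. -/
theorem average_policy_effect_identification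
    {Ω : Type*} {mΩ : MeasurableSpace Ω} (μ : Measure Ω) [IsProbabilityMeasure μ]
    (ℋ : MeasurableSpace Ω) (hℋ : ℋ ≤ mΩ)
    (m d : ℕ) (hd : 0 < d) (hdm : d < m)
    (Xdot : Ω → Matrix (Fin m) (Fin d) ℝ)
    (hXmeas : ∀ i j, StronglyMeasurable[ℋ] fun ω => Xdot ω i j)
    (hXrank : ∀ᵐ ω ∂μ, (Xdot ω).rank = d)
    (Q : Ω → Matrix (Fin d) (Fin m) ℝ)
    (hQ : ∀ ω, Q ω = ((Xdot ω)ᵀ * Xdot ω)⁻¹ * (Xdot ω)ᵀ)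
    (μvec : Ω → Fin d → ℝ) (hμvec : Integrable μvec μ)
    (g : Ω → Fin m → ℝ)
    (udot : Ω → Fin m → ℝ) (hu_int : Integrable udot μ)
    (hu_ce : ∀ i, μ[(fun ω => udot ω i) | ℋ] =ᵐ[μ] 0)
    (ydot : Ω → Fin m → ℝ)
    (hy : ∀ ω, ydot ω = Xdot ω *ᵥ μvec ω + g ω + udot ω)
    (w : Ω → Fin d → ℝ)
    (hwmeas : ∀ i, StronglyMeasurable[ℋ] fun ω => w ω i)
    (hwμ : Integrable (fun ω => w ω ⬝ᵥ μvec ω) μ)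
    (hwQu : Integrable (fun ω => w ω ⬝ᵥ (Q ω *ᵥ udot ω)) μ)
    (hwQg : Integrable (fun ω => w ω ⬝ᵥ (Q ω *ᵥ g ω)) μ)
    (hwQy : Integrable (fun ω => w ω ⬝ᵥ (Q ω *ᵥ ydot ω)) μ) :
    ∫ ω, (w ω ⬝ᵥ μvec ω) ∂μ
      = ∫ ω, w ω ⬝ᵥ (Q ω *ᵥ ydot ω - Q ω *ᵥ g ω) ∂μ :=
  average_policy_effect_identification_general μ ℋ hℋ m d Xdot hXmeas hXrank Q hQ μvec g udot hu_int
    hu_ce ydot hy w hwmeas hwμ hwQu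
end

section
/- Let N be a positive integer, let Ẋ_1, …, Ẋ_N be m×d real matrices each of full column rank d, and let w_1, …, w_N be strictly positive reals. If there exists a basis (e_1, …, e_m) of ℝ^m such that for every t ∈ {1, …, m} there is an index j_t with Ẋ_{j_t}ᵀ ·ᵥ e_t = 0, then the matrix ℳ := Σ_{j=1}^N w_j · M(Ẋ_j) is invertible. (Invertibility of ℳ(V) when the instruments are discretely distributed.) -/
/-!
It suffices that `ℳ x = 0` forces `x = 0`. Each `M(Ẋⱼ)` is symmetric and idempotent, so
`x ⬝ ℳ x = ∑ⱼ wⱼ ‖M(Ẋⱼ) x‖²`, and `ℳ x = 0` gives `M(Ẋⱼ) x = 0` for every `j`: `x` lies in the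
column space of every `Ẋⱼ`. As `e_t` is orthogonal to the column space of `Ẋ_{j_t}`, `x` is
orthogonal to the whole basis `e`, hence zero.
-/

open Matrix

namespace Matrix

variable {K ι m n : Type*} [Field K] [Fintype m] [Fintype n]

section Square

variable [DecidableEq n]

theorem isUnit_of_rank_eq_card_s7 {A : Matrix n n K} (hA : A.rank = Fintype.card n) : IsUnit A := by
  have hrange : LinearMap.range A.mulVecLin = ⊤ :=
    Submodule.eq_top_of_finrank_eq (by rwa [Module.finrank_fintype_fun_eq_card])
  exact mulVec_surjective_iff_isUnit.mp (LinearMap.range_eq_top.mp hrange)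

theorem isUnit_of_mulVec_eq_zero {A : Matrix n n K} (hA : ∀ x, A *ᵥ x = 0 → x = 0) :
    IsUnit A := by
  rw [isUnit_iff_isUnit_det, isUnit_iff_ne_zero, ne_eq, ← exists_mulVec_eq_zero_iff]
  rintro ⟨x, hx, hAx⟩
  exact hx (hA x hAx)

end Square

theorem _root_.Module.Basis.eq_zero_of_forall_dotProduct_eq_zero (e : Module.Basis m K (m → K))
    {x : m → K} (hx : ∀ t, e t ⬝ᵥ x = 0) : x = 0 := by
  have hdot : (dotProductBilin K K).flip x = 0 := e.ext fun t => hx t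
  exact dotProduct_eq_zero x fun v => by
    rw [dotProduct_comm]; exact LinearMap.congr_fun hdot v

theorem dotProduct_mulVec_eq_of_transpose_eq_of_mul_self_eq {A : Matrix m m K} (hT : Aᵀ = A)
    (hI : A * A = A) (x : m → K) : x ⬝ᵥ (A *ᵥ x) = (A *ᵥ x) ⬝ᵥ (A *ᵥ x) := by
  conv_lhs => rw [← hI, ← mulVec_mulVec, dotProduct_mulVec, ← mulVec_transpose, hT]

section Residual

variable [DecidableEq m] [DecidableEq n]

noncomputable def residualProjection (X : Matrix m n K) : Matrix m m K :=
  1 - X * (Xᵀ * X)⁻¹ * Xᵀ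

theorem residualProjection_transpose (X : Matrix m n K) :
    (residualProjection X)ᵀ = residualProjection X := by
  have hG : ((Xᵀ * X)⁻¹)ᵀ = (Xᵀ * X)⁻¹ := by
    rw [transpose_nonsing_inv, transpose_mul, transpose_transpose]
  simp only [residualProjection, transpose_sub, transpose_one, transpose_mul, transpose_transpose,
    hG, Matrix.mul_assoc]

theorem residualProjection_mul_self {X : Matrix m n K} (hX : IsUnit (Xᵀ * X)) :
    residualProjection X * residualProjection X = residualProjection X := by
  have hP : X * (Xᵀ * X)⁻¹ * Xᵀ * (X * (Xᵀ * X)⁻¹ * Xᵀ) = X * (Xᵀ * X)⁻¹ * Xᵀ := by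
    rw [Matrix.mul_assoc (X * _), ← Matrix.mul_assoc Xᵀ, ← Matrix.mul_assoc Xᵀ,
      mul_nonsing_inv _ ((isUnit_iff_isUnit_det _).mp hX), Matrix.one_mul]
  simp only [residualProjection, sub_mul, mul_sub, Matrix.one_mul, Matrix.mul_one, hP, sub_self,
    sub_zero]

theorem dotProduct_eq_zero_of_residualProjection_mulVec_eq_zero {X : Matrix m n K} {x v : m → K}
    (hx : residualProjection X *ᵥ x = 0) (hv : Xᵀ *ᵥ v = 0) : v ⬝ᵥ x = 0 := by
  have hcol : x = X *ᵥ (((Xᵀ * X)⁻¹ * Xᵀ) *ᵥ x) := by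
    rw [residualProjection, sub_mulVec, one_mulVec, sub_eq_zero] at hx
    rw [mulVec_mulVec, ← Matrix.mul_assoc, ← hx]
  rw [hcol, dotProduct_mulVec, ← mulVec_transpose, hv, zero_dotProduct]

end Residual

variable [LinearOrder K] [IsStrictOrderedRing K]

theorem mulVec_eq_zero_of_sum_smul_mulVec_eq_zero [Fintype ι] {A : ι → Matrix m m K}
    (hT : ∀ j, (A j)ᵀ = A j) (hI : ∀ j, A j * A j = A j) {w : ι → K} (hw : ∀ j, 0 < w j)
    {x : m → K} (hx : (∑ j, w j • A j) *ᵥ x = 0) (j : ι) : A j *ᵥ x = 0 := by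
  have hsum : ∑ j, w j * ((A j *ᵥ x) ⬝ᵥ (A j *ᵥ x)) = 0 := by
    rw [← dotProduct_zero x, ← hx, sum_mulVec, dotProduct_sum]
    refine Finset.sum_congr rfl fun j _ => ?_
    rw [smul_mulVec, dotProduct_smul, smul_eq_mul,
      dotProduct_mulVec_eq_of_transpose_eq_of_mul_self_eq (hT j) (hI j)]
  have hterm := (Finset.sum_eq_zero_iff_of_nonneg fun j _ =>
    mul_nonneg (hw j).le (Finset.sum_nonneg fun i _ => mul_self_nonneg _)).mp hsum j
    (Finset.mem_univ j)
  exact dotProduct_self_eq_zero.mp ((mul_eq_zero.mp hterm).resolve_left (hw j).ne')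

theorem isUnit_transpose_mul_self [DecidableEq n] {X : Matrix m n K}
    (hX : X.rank = Fintype.card n) : IsUnit (Xᵀ * X) :=
  isUnit_of_rank_eq_card_s7 ((rank_transpose_mul_self X).trans hX)

end Matrix

theorem weighted_sum_of_projections_invertible_general
    (m d N : ℕ)
    (Xdot : Fin N → Matrix (Fin m) (Fin d) ℝ)
    (hrank : ∀ j, (Xdot j).rank = d)
    (w : Fin N → ℝ) (hw : ∀ j, 0 < w j)
    (e : Module.Basis (Fin m) ℝ (Fin m → ℝ))
    (he : ∀ t : Fin m, ∃ j : Fin N, (Xdot j)ᵀ *ᵥ e t = 0) :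
    IsUnit (∑ j, w j •
      ((1 : Matrix (Fin m) (Fin m) ℝ)
        - Xdot j * ((Xdot j)ᵀ * Xdot j)⁻¹ * (Xdot j)ᵀ)) := by
  have hGram j : IsUnit ((Xdot j)ᵀ * Xdot j) :=
    isUnit_transpose_mul_self (by rw [hrank j, Fintype.card_fin])
  refine isUnit_of_mulVec_eq_zero fun x hx => e.eq_zero_of_forall_dotProduct_eq_zero fun t => ?_
  have hMx := mulVec_eq_zero_of_sum_smul_mulVec_eq_zero (A := fun j => residualProjection (Xdot j))
    (fun j => residualProjection_transpose _) (fun j => residualProjection_mul_self (hGram j)) hw hx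
  obtain ⟨j, hj⟩ := he t
  exact dotProduct_eq_zero_of_residualProjection_mulVec_eq_zero (hMx j) hj

/-- Invertibility of `ℳ(V)` when the instruments are discretely distributed: a positively
weighted finite sum of projections `M(Ẋ_j) = I − Ẋ_j(Ẋ_jᵀẊ_j)⁻¹Ẋ_jᵀ` is invertible when some
basis vectors of `ℝ^m` are annihilated by the transposes of the corresponding matrices. -/
theorem weighted_sum_of_projections_invertible
    (m d N : ℕ) (hd : 0 < d) (hdm : d < m) (hN : 0 < N)
    (Xdot : Fin N → Matrix (Fin m) (Fin d) ℝ)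
    (hrank : ∀ j, (Xdot j).rank = d)
    (w : Fin N → ℝ) (hw : ∀ j, 0 < w j)
    (e : Module.Basis (Fin m) ℝ (Fin m → ℝ))
    (he : ∀ t : Fin m, ∃ j : Fin N, (Xdot j)ᵀ *ᵥ e t = 0) :
    IsUnit (∑ j, w j •
      ((1 : Matrix (Fin m) (Fin m) ℝ)
        - Xdot j * ((Xdot j)ᵀ * Xdot j)⁻¹ * (Xdot j)ᵀ)) :=
  weighted_sum_of_projections_invertible_general m d N Xdot hrank w hw e he
end
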